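/- Let η ≥ 1, let (G, k) be an instance of Treedepth-η Deletion, and let ℓ be a non-negative integer. Let S ⊆ V(G) and let v ∈ V(G) \ S be such that N_G(S) ⊆ N_G[v]. Let X_1, …, X_{ℓ+η} ⊆ V(G) induce connected subgraphs of G such that: (1) for all i ∈ [ℓ+η], td(G[X_i]) ≥ td(G[S]) and v ∈ N_G(X_i); (2) the sets X_1, …, X_{ℓ+η} are pairwise disjoint and disjoint from S; and (3) every graph obtained from G by removing a subset of the edges between v and S has a minimum-size treedepth-η modulator containing at most ℓ vertices of 𝒳 := X_1 ∪ … ∪ X_{ℓ+η}. Let G' be the graph obtained from G by removing all edges between v and S. Then G has a treedepth-η modulator of size at most k if and only if G' does. -/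

import Mathlib

/-- A rooted forest on the vertex type `V`, given by a parent function.
Acyclicity guarantees that following parents never returns to a vertex. -/
structure RootedForest (V : Type*) where
  parent : V → Option V
  acyclic : ∀ v : V, ¬ Relation.TransGen (fun a b => parent a = some b) v v

namespace RootedForest

variable {V : Type*} (F : RootedForest V)

/-- `F.Anc x y` means that `y` is an ancestor of `x` in the rooted forest `F`
(every vertex is an ancestor of itself). -/
def Anc (x y : V) : Prop :=
  Relation.ReflTransGen (fun a b => F.parent a = some b) x y

/-- `F.ProperAnc x y` means that `y` is a proper ancestor of `x`. -/
def ProperAnc (x y : V) : Prop :=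
  Relation.TransGen (fun a b => F.parent a = some b) x y

/-- `x` and `y` are in ancestor–descendant relation in `F`. -/
def AncDesc (x y : V) : Prop := F.Anc x y ∨ F.Anc y x

/-- The depth of `v` in `F`: the number of vertices on the path from `v`
to the root of its tree (including both endpoints). -/
noncomputable def depth (v : V) : ℕ := Nat.card {u : V // F.Anc v u}

/-- The height of the forest: the maximum depth of a vertex. -/
noncomputable def height : ℕ := sSup (Set.range F.depth)

/-- The reach of `v` in `F`. -/
noncomputable def reach (v : V) : ℕ := F.height - F.depth v

/-- The vertex set of the subtree of `F` rooted at `v` (all descendants of `v`,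
including `v` itself). -/
def subtree (v : V) : Set V := {u : V | F.Anc u v}

/-- `x` and `y` lie in the same tree of the forest, i.e. they have a common ancestor. -/
def SameTree (x y : V) : Prop := ∃ w : V, F.Anc x w ∧ F.Anc y w

end RootedForest

/-- `F` is a treedepth decomposition of `G`: a rooted forest on the vertex set of `G`
such that the endpoints of every edge are in ancestor–descendant relation. -/
def SimpleGraph.IsTreedepthDecomp {V : Type*} (G : SimpleGraph V) (F : RootedForest V) : Prop :=
  ∀ ⦃u v : V⦄, G.Adj u v → F.AncDesc u v

/-- The treedepth of `G`: the minimum height of a treedepth decomposition of `G`. -/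
noncomputable def SimpleGraph.treedepth {V : Type*} (G : SimpleGraph V) : ℕ :=
  sInf {n : ℕ | ∃ F : RootedForest V, G.IsTreedepthDecomp F ∧ F.height = n}

/-- The open neighborhood of a vertex set `S`: all vertices outside `S`
with a neighbor in `S`. -/
def SimpleGraph.nbhdSet {V : Type*} (G : SimpleGraph V) (S : Set V) : Set V :=
  {u : V | u ∉ S ∧ ∃ s ∈ S, G.Adj u s}

/-- `Z` is a treedepth-`η` modulator of `G`: removing `Z` leaves a graph of
treedepth at most `η`. -/
def SimpleGraph.IsTdMod {V : Type*} (G : SimpleGraph V) (η : ℕ) (Z : Set V) : Prop :=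
  (G.induce Zᶜ).treedepth ≤ η

/-- `G` contains `m` pairwise internally vertex-disjoint paths between `u` and `v`. -/
def IntDisjointPaths {V : Type*} (G : SimpleGraph V) (u v : V) (m : ℕ) : Prop :=
  ∃ P : Fin m → G.Walk u v, (∀ i, (P i).IsPath) ∧
    ∀ i j, i ≠ j → ∀ w, w ∈ (P i).support → w ∈ (P j).support → w = u ∨ w = v

/-- A treedepth decomposition is nice if every subtree induces a connected subgraph. -/
def IsNiceDecomp {V : Type*} (G : SimpleGraph V) (F : RootedForest V) : Prop :=
  ∀ v : V, (G.induce (F.subtree v)).Connected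

/-!
Let `Z` be a minimum treedepth-`η` modulator of `G'` meeting `𝒳` in at most `ℓ` vertices; we show
that `Z` is also a modulator of `G`. This is clear if `v ∈ Z`. Otherwise fix a decomposition `F`
of `G' - Z` of height at most `η`, in which `v` has depth `d ≤ η`. At least `η` of the sets `X i`
avoid `Z`; each is connected and contains a neighbour of `v`, so its highest vertex is comparable
with `v`. As `v` has only `d - 1 < η` proper ancestors, one of these `X i` lies entirely below
`v`, hence `td(G[S]) ≤ td(G[X i]) ≤ η - d`. Finally, re-attach the vertices of `S` that are not
comparable with `v` below `v`, following an optimal decomposition of `G[S]`: the result has height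
at most `η`, it covers the edges between `v` and `S`, and by `N(S) ⊆ N[v]` every other edge leaving
the re-attached part ends at an ancestor of `v`.
-/

open Function

namespace RootedForest

variable {V : Type*} {F : RootedForest V} {x y z : V}

lemma Anc.refl (F : RootedForest V) (x : V) : F.Anc x x := Relation.ReflTransGen.refl

lemma Anc.trans (h : F.Anc x y) (h' : F.Anc y z) : F.Anc x z :=
  Relation.ReflTransGen.trans h h'

lemma ProperAnc.anc (h : F.ProperAnc x y) : F.Anc x y := h.to_reflTransGen

lemma ProperAnc.ne (h : F.ProperAnc x y) : x ≠ y := by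
  rintro rfl
  exact F.acyclic x h

lemma ProperAnc.trans_anc (h : F.ProperAnc x y) (h' : F.Anc y z) : F.ProperAnc x z :=
  Relation.TransGen.trans_left h h'

lemma Anc.properAnc_of_ne (h : F.Anc x y) (hne : x ≠ y) : F.ProperAnc x y :=
  (Relation.reflTransGen_iff_eq_or_transGen.mp h).resolve_left (Ne.symm hne)

lemma Anc.antisymm (h : F.Anc x y) (h' : F.Anc y x) : x = y := by
  by_contra hne
  exact F.acyclic x ((h.properAnc_of_ne hne).trans_anc h')

lemma Anc.total_of_anc (h : F.Anc x y) (h' : F.Anc x z) : F.Anc y z ∨ F.Anc z y := by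
  induction h using Relation.ReflTransGen.head_induction_on with
  | refl => exact Or.inl h'
  | head hstep htail ih =>
    rcases Relation.ReflTransGen.cases_head h' with rfl | ⟨c, hstep', htail'⟩
    · exact Or.inr (Relation.ReflTransGen.head hstep htail)
    · rw [hstep, Option.some_inj] at hstep'
      exact ih (hstep' ▸ htail')

lemma AncDesc.symm (h : F.AncDesc x y) : F.AncDesc y x := Or.symm h

lemma AncDesc.anc_of_not_ancDesc {a b v : V} (hab : F.AncDesc a b) (hbv : F.AncDesc b v)
    (hav : ¬ F.AncDesc a v) : F.Anc v b := by
  rcases hbv with hbv | hvb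
  · rcases hab with hab | hba
    · exact absurd (Or.inl (hab.trans hbv)) hav
    · exact absurd (hba.total_of_anc hbv) hav
  · exact hvb

lemma depth_eq_ncard (x : V) : F.depth x = {y | F.Anc x y}.ncard :=
  (Nat.card_coe_set_eq _).symm

lemma ncard_properAnc_add_one [Finite V] (x : V) :
    {y | F.ProperAnc x y}.ncard + 1 = F.depth x := by
  have hsplit : {y | F.Anc x y} = insert x {y | F.ProperAnc x y} := by
    ext y
    by_cases hxy : x = y
    · subst hxy
      simp [Anc.refl]
    · simp only [Set.mem_ofPred_eq, Set.mem_insert_iff, Ne.symm hxy, false_or]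
      exact ⟨fun h => h.properAnc_of_ne hxy, ProperAnc.anc⟩
  rw [depth_eq_ncard, hsplit, Set.ncard_insert_of_notMem (fun h => h.ne rfl)]

lemma depth_le_height [Finite V] (x : V) : F.depth x ≤ F.height :=
  le_csSup (Set.finite_range _).bddAbove (Set.mem_range_self x)

lemma height_le {n : ℕ} (h : ∀ x, F.depth x ≤ n) : F.height ≤ n :=
  csSup_le' (by rintro _ ⟨x, rfl⟩; exact h x)

end RootedForest

/-- The ancestor relations of rooted forests on a finite type: `r x y` reads "`y` is an ancestor
of `x`", as in `RootedForest.Anc`. -/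
structure IsForestOrder {V : Type*} (r : V → V → Prop) : Prop where
  refl : ∀ x, r x x
  trans : ∀ {x y z}, r x y → r y z → r x z
  antisymm : ∀ {x y}, r x y → r y x → x = y
  total_of_rel : ∀ {x y z}, r x y → r x z → r y z ∨ r z y

namespace IsForestOrder

variable {V : Type*} {r : V → V → Prop} {x y p : V}

def IsParent (r : V → V → Prop) (x p : V) : Prop :=
  r x p ∧ p ≠ x ∧ ∀ y, r x y → y ≠ x → r p y

lemma exists_isParent [Finite V] (hr : IsForestOrder r) (hxy : r x y) (hne : y ≠ x) :
    ∃ p, IsParent r x p := by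
  obtain ⟨p, ⟨hxp, hpx⟩, hmax⟩ := Set.Finite.exists_maximalFor (fun y => {u | r y u})
    {y | r x y ∧ y ≠ x} (Set.toFinite _) ⟨y, hxy, hne⟩
  refine ⟨p, hxp, hpx, fun z hxz hzx => ?_⟩
  rcases hr.total_of_rel hxp hxz with hpz | hzp
  · exact hpz
  · exact hmax ⟨hxz, hzx⟩ (fun u hu => hr.trans hzp hu) (hr.refl z)

open Classical in
noncomputable def parent (r : V → V → Prop) (x : V) : Option V :=
  if h : ∃ p, IsParent r x p then some h.choose else none

lemma isParent_of_parent_eq (h : parent r x = some p) : IsParent r x p := by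
  unfold parent at h
  split at h
  · rename_i hex
    exact Option.some_inj.mp h ▸ hex.choose_spec
  · exact absurd h (by simp)

lemma rel_of_reflTransGen (hr : IsForestOrder r)
    (h : Relation.ReflTransGen (fun a b => parent r a = some b) x y) : r x y := by
  induction h with
  | refl => exact hr.refl x
  | tail _ hstep ih => exact hr.trans ih (isParent_of_parent_eq hstep).1

lemma reflTransGen_of_rel [Finite V] (hr : IsForestOrder r) (h : r x y) :
    Relation.ReflTransGen (fun a b => parent r a = some b) x y := by
  induction hn : {u | r x u}.ncard using Nat.strong_induction_on generalizing x with
  | _ n ih =>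
    by_cases hxy : y = x
    · exact hxy ▸ Relation.ReflTransGen.refl
    obtain ⟨p, hp⟩ : ∃ p, parent r x = some p :=
      ⟨_, dif_pos (hr.exists_isParent h hxy)⟩
    have hxp := isParent_of_parent_eq hp
    have hlt : {u | r p u}.ncard < n := hn ▸ Set.ncard_lt_ncard
      ⟨fun u hu => hr.trans hxp.1 hu,
        fun hsub => hxp.2.1 (hr.antisymm (hsub (hr.refl x)) hxp.1)⟩ (Set.toFinite _)
    exact Relation.ReflTransGen.head hp (ih _ hlt (hxp.2.2 y h hxy) rfl)

end IsForestOrder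

namespace RootedForest

section OfForestOrder

variable {V : Type*} [Finite V] {r : V → V → Prop}

noncomputable def ofForestOrder (hr : IsForestOrder r) : RootedForest V where
  parent := IsForestOrder.parent r
  acyclic x h := by
    obtain ⟨p, hxp, hpx⟩ := Relation.TransGen.head'_iff.mp h
    have hp := IsForestOrder.isParent_of_parent_eq hxp
    exact hp.2.1 (hr.antisymm (hr.rel_of_reflTransGen hpx) hp.1)

lemma anc_ofForestOrder_iff (hr : IsForestOrder r) {x y : V} :
    (ofForestOrder hr).Anc x y ↔ r x y :=
  ⟨hr.rel_of_reflTransGen, hr.reflTransGen_of_rel⟩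

lemma depth_ofForestOrder (hr : IsForestOrder r) (x : V) :
    (ofForestOrder hr).depth x = {y | r x y}.ncard := by
  simp only [depth_eq_ncard, anc_ofForestOrder_iff]

lemma exists_forall_ancDesc : ∃ F : RootedForest V, ∀ x y, F.AncDesc x y := by
  obtain ⟨n, ⟨e⟩⟩ := Finite.exists_equiv_fin V
  have hr : IsForestOrder fun x y => e x ≤ e y :=
    ⟨fun _ => le_rfl, le_trans, fun h h' => e.injective (le_antisymm h h'),
      fun _ _ => le_total _ _⟩
  exact ⟨ofForestOrder hr, fun x y => by
    simp only [AncDesc, anc_ofForestOrder_iff]; exact le_total _ _⟩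

end OfForestOrder

section Comap

variable {A B : Type*} [Finite A] {F : RootedForest B} {f : A → B} {hf : Injective f}

omit [Finite A] in
lemma isForestOrder_anc_comp (F : RootedForest B) (hf : Injective f) :
    IsForestOrder fun a b => F.Anc (f a) (f b) :=
  ⟨fun a => Anc.refl F (f a), Anc.trans, fun h h' => hf (h.antisymm h'), Anc.total_of_anc⟩

noncomputable def comap (F : RootedForest B) (f : A → B) (hf : Injective f) : RootedForest A :=
  ofForestOrder (isForestOrder_anc_comp F hf)

lemma anc_comap_iff {a b : A} : (F.comap f hf).Anc a b ↔ F.Anc (f a) (f b) :=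
  anc_ofForestOrder_iff _

variable [Finite B]

lemma depth_comap_le (a : A) : (F.comap f hf).depth a ≤ F.depth (f a) := by
  rw [comap, depth_ofForestOrder, depth_eq_ncard, ← Set.ncard_image_of_injective _ hf]
  exact Set.ncard_le_ncard (by rintro _ ⟨b, hb, rfl⟩; exact hb)

lemma height_comap_le : (F.comap f hf).height ≤ F.height :=
  height_le fun a => (depth_comap_le a).trans (depth_le_height _)

lemma depth_comap_add_depth_le {v : B} (hbelow : ∀ a, F.ProperAnc (f a) v) (a : A) :
    (F.comap f hf).depth a + F.depth v ≤ F.depth (f a) := by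
  rw [comap, depth_ofForestOrder, depth_eq_ncard, depth_eq_ncard,
    ← Set.ncard_image_of_injective _ hf, ← Set.ncard_union_eq]
  · refine Set.ncard_le_ncard (Set.union_subset ?_ fun u hu => (hbelow a).anc.trans hu)
    rintro _ ⟨b, hb, rfl⟩
    exact hb
  · refine Set.disjoint_left.mpr ?_
    rintro _ ⟨b, -, rfl⟩ hvb
    exact (hbelow b).ne ((hbelow b).anc.antisymm hvb)

end Comap

section Graft

variable {V : Type*} {F : RootedForest V} {M : Set V} {v : V} {FM : RootedForest M}

/-- The ancestor relation of `F` with the vertices of `M` removed and re-attached below `v`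
following `FM`. -/
def GraftRel (F : RootedForest V) (M : Set V) (v : V) (FM : RootedForest M) (x y : V) : Prop :=
  (∃ (hx : x ∈ M) (hy : y ∈ M), FM.Anc ⟨x, hx⟩ ⟨y, hy⟩) ∨ (x ∈ M ∧ y ∉ M ∧ F.Anc v y) ∨
    (x ∉ M ∧ y ∉ M ∧ F.Anc x y)

lemma GraftRel.trans {x y z : V} :
    GraftRel F M v FM x y → GraftRel F M v FM y z → GraftRel F M v FM x z := by
  rintro (⟨hx, hy, hxy⟩ | ⟨hx, hy, hxy⟩ | ⟨hx, hy, hxy⟩)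
    (⟨hy', hz, hyz⟩ | ⟨hy', hz, hyz⟩ | ⟨hy', hz, hyz⟩)
  all_goals try contradiction
  · exact Or.inl ⟨hx, hz, hxy.trans hyz⟩
  · exact Or.inr (Or.inl ⟨hx, hz, hyz⟩)
  · exact Or.inr (Or.inl ⟨hx, hz, hxy.trans hyz⟩)
  · exact Or.inr (Or.inr ⟨hx, hz, hxy.trans hyz⟩)

lemma GraftRel.antisymm {x y : V} :
    GraftRel F M v FM x y → GraftRel F M v FM y x → x = y := by
  rintro (⟨hx, hy, hxy⟩ | ⟨hx, hy, hxy⟩ | ⟨hx, hy, hxy⟩)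
    (⟨hy', hx', hyx⟩ | ⟨hy', hx', hyx⟩ | ⟨hy', hx', hyx⟩)
  all_goals try contradiction
  · exact congrArg Subtype.val (hxy.antisymm hyx)
  · exact hxy.antisymm hyx

lemma GraftRel.total_of_graftRel {x y z : V} : GraftRel F M v FM x y → GraftRel F M v FM x z →
    GraftRel F M v FM y z ∨ GraftRel F M v FM z y := by
  rintro (⟨hx, hy, hxy⟩ | ⟨hx, hy, hxy⟩ | ⟨hx, hy, hxy⟩)
    (⟨hx', hz, hxz⟩ | ⟨hx', hz, hxz⟩ | ⟨hx', hz, hxz⟩)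
  all_goals try contradiction
  · rcases hxy.total_of_anc hxz with h | h
    · exact Or.inl (Or.inl ⟨hy, hz, h⟩)
    · exact Or.inr (Or.inl ⟨hz, hy, h⟩)
  · exact Or.inl (Or.inr (Or.inl ⟨hy, hz, hxz⟩))
  · exact Or.inr (Or.inr (Or.inl ⟨hz, hy, hxy⟩))
  all_goals
    rcases hxy.total_of_anc hxz with h | h
    · exact Or.inl (Or.inr (Or.inr ⟨hy, hz, h⟩))
    · exact Or.inr (Or.inr (Or.inr ⟨hz, hy, h⟩))

lemma isForestOrder_graftRel : IsForestOrder (GraftRel F M v FM) where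
  refl x := by
    by_cases hx : x ∈ M
    · exact Or.inl ⟨hx, hx, Anc.refl FM _⟩
    · exact Or.inr (Or.inr ⟨hx, hx, Anc.refl F x⟩)
  trans := GraftRel.trans
  antisymm := GraftRel.antisymm
  total_of_rel := GraftRel.total_of_graftRel

variable [Finite V]

noncomputable def graft (F : RootedForest V) (M : Set V) (v : V) (FM : RootedForest M) :
    RootedForest V :=
  ofForestOrder (isForestOrder_graftRel (F := F) (M := M) (v := v) (FM := FM))

lemma height_graft_le : (F.graft M v FM).height ≤ max F.height (FM.height + F.depth v) := by
  refine height_le fun x => ?_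
  rw [graft, depth_ofForestOrder]
  by_cases hx : x ∈ M
  · have hsub : {y | GraftRel F M v FM x y} ⊆
        Subtype.val '' {y | FM.Anc ⟨x, hx⟩ y} ∪ {y | F.Anc v y} := by
      rintro y (⟨_, hy, hxy⟩ | ⟨-, -, hvy⟩ | ⟨hx', -⟩)
      · exact Or.inl ⟨⟨y, hy⟩, hxy, rfl⟩
      · exact Or.inr hvy
      · exact absurd hx hx'
    calc _ ≤ _ := Set.ncard_le_ncard hsub
      _ ≤ _ := Set.ncard_union_le _ _
      _ = FM.depth ⟨x, hx⟩ + F.depth v := by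
        rw [Set.ncard_image_of_injective _ Subtype.val_injective, depth_eq_ncard, depth_eq_ncard]
      _ ≤ _ := le_max_of_le_right (Nat.add_le_add_right (depth_le_height _) _)
  · have hsub : {y | GraftRel F M v FM x y} ⊆ {y | F.Anc x y} := by
      rintro y (⟨hx', -⟩ | ⟨hx', -⟩ | ⟨-, -, hxy⟩)
      · exact absurd hx' hx
      · exact absurd hx' hx
      · exact hxy
    calc _ ≤ _ := Set.ncard_le_ncard hsub
      _ = F.depth x := (depth_eq_ncard x).symm
      _ ≤ _ := le_max_of_le_left (depth_le_height x)

lemma isTreedepthDecomp_graft {H : SimpleGraph V}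
    (hout : ∀ a b, a ∉ M → b ∉ M → H.Adj a b → F.AncDesc a b)
    (hcross : ∀ a b, a ∈ M → b ∉ M → H.Adj a b → F.Anc v b)
    (hM : (H.induce M).IsTreedepthDecomp FM) : H.IsTreedepthDecomp (F.graft M v FM) := by
  intro a b hab
  simp only [AncDesc, graft, anc_ofForestOrder_iff, GraftRel]
  by_cases ha : a ∈ M <;> by_cases hb : b ∈ M
  · rcases hM (u := ⟨a, ha⟩) (v := ⟨b, hb⟩) hab with h | h
    · exact Or.inl (Or.inl ⟨ha, hb, h⟩)
    · exact Or.inr (Or.inl ⟨hb, ha, h⟩)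
  · exact Or.inl (Or.inr (Or.inl ⟨ha, hb, hcross a b ha hb hab⟩))
  · exact Or.inr (Or.inr (Or.inl ⟨hb, ha, hcross b a hb ha hab.symm⟩))
  · rcases hout a b ha hb hab with h | h
    · exact Or.inl (Or.inr (Or.inr ⟨ha, hb, h⟩))
    · exact Or.inr (Or.inr (Or.inr ⟨hb, ha, h⟩))

end Graft

end RootedForest

lemma Set.ncard_setOf_not_disjoint_le {ι V : Type*} [Finite V] {X : ι → Set V}
    (hX : Pairwise (Disjoint on X)) (Z : Set V) :
    {i | ¬ Disjoint (X i) Z}.ncard ≤ (Z ∩ ⋃ i, X i).ncard := by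
  have hmeet (i : {i | ¬ Disjoint (X i) Z}) : ∃ z, z ∈ X i ∧ z ∈ Z :=
    Set.not_disjoint_iff.mp i.2
  choose z hzX hzZ using hmeet
  rw [← Nat.card_coe_set_eq, ← Nat.card_coe_set_eq]
  refine Nat.card_le_card_of_injective
    (fun i => ⟨z i, hzZ i, Set.mem_iUnion.mpr ⟨i, hzX i⟩⟩) fun i j hij => ?_
  by_contra hne
  have hzij : z i = z j := congrArg Subtype.val hij
  exact Set.disjoint_left.mp (hX fun h => hne (Subtype.ext h)) (hzX i) (hzij ▸ hzX j)

namespace SimpleGraph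

open RootedForest

variable {V α : Type*} {G : SimpleGraph V} {K : SimpleGraph α} {F : RootedForest V}
  {S U Z : Set V} {v : V} {η : ℕ}

lemma treedepth_le_height (hF : G.IsTreedepthDecomp F) : G.treedepth ≤ F.height :=
  Nat.sInf_le ⟨F, hF, rfl⟩

lemma exists_isTreedepthDecomp_height_eq [Finite V] (G : SimpleGraph V) :
    ∃ F, G.IsTreedepthDecomp F ∧ F.height = G.treedepth := by
  obtain ⟨F, hF⟩ := RootedForest.exists_forall_ancDesc (V := V)
  exact Nat.sInf_mem (s := {n | ∃ F, G.IsTreedepthDecomp F ∧ F.height = n})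
    ⟨F.height, F, fun x y _ => hF x y, rfl⟩

lemma IsTreedepthDecomp.comap [Finite α] (hF : G.IsTreedepthDecomp F) (f : K.Copy G) :
    K.IsTreedepthDecomp (F.comap f f.injective) := by
  intro a b hab
  simp only [AncDesc, anc_comap_iff]
  exact hF (f.toHom.map_adj hab)

lemma treedepth_le_of_isContained [Finite V] [Finite α] (h : K ⊑ G) :
    K.treedepth ≤ G.treedepth := by
  obtain ⟨f⟩ := h
  obtain ⟨F, hF, hFG⟩ := G.exists_isTreedepthDecomp_height_eq
  exact hFG ▸ (treedepth_le_height (hF.comap f)).trans height_comap_le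

lemma treedepth_add_depth_le_height [Finite V] [Finite α] (hF : G.IsTreedepthDecomp F)
    (f : K.Copy G) (hbelow : ∀ a, F.ProperAnc (f a) v) : K.treedepth + F.depth v ≤ F.height := by
  have hcomap : (F.comap f f.injective).height + F.depth v ≤ F.height := by
    refine Nat.add_le_of_le_sub (depth_le_height v) (height_le fun a => ?_)
    have := depth_comap_add_depth_le (f := f) (hf := f.injective) hbelow a
    have := depth_le_height (F := F) (f a)
    omega
  have := treedepth_le_height (hF.comap f)
  omega

lemma IsTreedepthDecomp.exists_apex [Finite α] (hF : G.IsTreedepthDecomp F) (f : K →g G)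
    (hK : K.Connected) : ∃ m, ∀ a, F.Anc (f a) (f m) := by
  obtain ⟨m, -, hmax⟩ := Set.Finite.exists_minimalFor (fun a => {u | F.Anc (f a) u}) Set.univ
    Set.finite_univ ⟨hK.nonempty.some, trivial⟩
  refine ⟨m, fun a => ?_⟩
  induction (reachable_iff_reflTransGen m a).mp (hK.preconnected m a) with
  | refl => exact Anc.refl F _
  | tail _ hbc ih =>
    rcases hF (f.map_adj hbc) with hbc | hcb
    · rcases hbc.total_of_anc ih with hcm | hmc
      · exact hcm
      · exact hmax trivial (fun u hu => hmc.trans hu) (Anc.refl F _)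
    · exact hcb.trans ih

lemma IsTreedepthDecomp.exists_properAnc_or_forall_properAnc [Finite α]
    (hF : G.IsTreedepthDecomp F) (f : K →g G) (hK : K.Connected) (hv : ∀ a, f a ≠ v)
    (hadj : ∃ a, G.Adj v (f a)) :
    (∃ a, F.ProperAnc v (f a)) ∨ ∀ a, F.ProperAnc (f a) v := by
  obtain ⟨m, hm⟩ := hF.exists_apex f hK
  obtain ⟨a, hva⟩ := hadj
  rcases hF hva with hva | hav
  · exact Or.inl ⟨m, (hva.trans (hm a)).properAnc_of_ne (hv m).symm⟩
  · rcases (hm a).total_of_anc hav with hmv | hvm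
    · exact Or.inr fun b => ((hm b).trans hmv).properAnc_of_ne (hv b)
    · exact Or.inl ⟨m, hvm.properAnc_of_ne (hv m).symm⟩

theorem exists_treedepth_add_depth_le_height [Finite V] {ι : Type*} {β : ι → Type*}
    [∀ i, Finite (β i)] {K : ∀ i, SimpleGraph (β i)} (hF : G.IsTreedepthDecomp F)
    (f : ∀ i, (K i).Copy G) (hK : ∀ i, (K i).Connected)
    (hdisj : Pairwise fun i j => Disjoint (Set.range (f i)) (Set.range (f j)))
    (hv : ∀ i a, f i a ≠ v) (hadj : ∀ i, ∃ a, G.Adj v (f i a))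
    (hι : F.depth v ≤ Nat.card ι) : ∃ i, (K i).treedepth + F.depth v ≤ F.height := by
  by_contra! hcon
  have habove (i : ι) : ∃ a, F.ProperAnc v (f i a) :=
    (hF.exists_properAnc_or_forall_properAnc (f i).toHom (hK i) (hv i) (hadj i)).resolve_right
      fun hbelow => (hcon i).not_ge (treedepth_add_depth_le_height hF (f i) hbelow)
  choose a ha using habove
  have hinj : Injective fun i => (⟨f i (a i), ha i⟩ : {u | F.ProperAnc v u}) := by
    intro i j hij
    by_contra hne
    refine Set.disjoint_left.mp (hdisj hne) ⟨a i, rfl⟩ ?_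
    exact ⟨a j, (congrArg Subtype.val hij).symm⟩
  have hcard := Nat.card_le_card_of_injective _ hinj
  rw [Nat.card_coe_set_eq] at hcard
  have := ncard_properAnc_add_one (F := F) v
  omega

def starEdges (v : V) (S : Set V) : Set (Sym2 V) := {e | ∃ s ∈ S, e = s(v, s)}

lemma deleteEdges_starEdges_adj {a b : V} :
    (G.deleteEdges (starEdges v S)).Adj a b ↔
      G.Adj a b ∧ ¬(a = v ∧ b ∈ S ∨ b = v ∧ a ∈ S) := by
  simp only [deleteEdges_adj, starEdges, Set.mem_ofPred_eq, Sym2.eq_iff]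
  constructor
  · rintro ⟨hab, hD⟩
    refine ⟨hab, ?_⟩
    rintro (⟨rfl, hb⟩ | ⟨rfl, ha⟩)
    · exact hD ⟨b, hb, Or.inl ⟨rfl, rfl⟩⟩
    · exact hD ⟨a, ha, Or.inr ⟨rfl, rfl⟩⟩
  · rintro ⟨hab, hD⟩
    refine ⟨hab, ?_⟩
    rintro ⟨s, hs, ⟨rfl, rfl⟩ | ⟨rfl, rfl⟩⟩
    · exact hD (Or.inl ⟨rfl, hs⟩)
    · exact hD (Or.inr ⟨rfl, hs⟩)

theorem treedepth_le_of_isTreedepthDecomp_deleteEdges_starEdges [Finite V] (hv : v ∉ S)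
    (hN : G.nbhdSet S ⊆ insert v (G.neighborSet v))
    (hF : (G.deleteEdges (starEdges v S)).IsTreedepthDecomp F) (hFη : F.height ≤ η)
    (hSη : (G.induce S).treedepth + F.depth v ≤ η) : G.treedepth ≤ η := by
  set M : Set V := {x | x ∈ S ∧ ¬ F.AncDesc x v}
  have hMS : M ⊆ S := fun x hx => hx.1
  obtain ⟨FS, hFS, hFSh⟩ := (G.induce S).exists_isTreedepthDecomp_height_eq
  let incl : (G.induce M).Copy (G.induce S) := (G.induceHomOfLE hMS).toCopy
  have hout (a b : V) (ha : a ∉ M) (hb : b ∉ M) (hab : G.Adj a b) : F.AncDesc a b := by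
    by_cases hstar : a = v ∧ b ∈ S ∨ b = v ∧ a ∈ S
    · rcases hstar with ⟨rfl, hbS⟩ | ⟨rfl, haS⟩
      · exact (not_not.mp fun h => hb ⟨hbS, h⟩).symm
      · exact not_not.mp fun h => ha ⟨haS, h⟩
    · exact hF (deleteEdges_starEdges_adj.mpr ⟨hab, hstar⟩)
  have hcross (a b : V) (ha : a ∈ M) (hb : b ∉ M) (hab : G.Adj a b) : F.Anc v b := by
    by_cases hbv : b = v
    · exact hbv ▸ Anc.refl F v
    have hav : a ≠ v := fun h => hv (h ▸ ha.1)
    have hab' : F.AncDesc a b := hF (deleteEdges_starEdges_adj.mpr ⟨hab, by tauto⟩)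
    refine hab'.anc_of_not_ancDesc ?_ ha.2
    by_cases hbS : b ∈ S
    · exact not_not.mp fun h => hb ⟨hbS, h⟩
    · obtain hbv' | hvb := hN ⟨hbS, a, ha.1, hab.symm⟩
      · exact absurd hbv' hbv
      · exact (hF (deleteEdges_starEdges_adj.mpr ⟨hvb, by tauto⟩)).symm
  have hMη : (FS.comap incl incl.injective).height + F.depth v ≤ η :=
    (Nat.add_le_add_right (hFSh ▸ height_comap_le) _).trans hSη
  calc G.treedepth ≤ _ := treedepth_le_height (isTreedepthDecomp_graft hout hcross (hFS.comap incl))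
    _ ≤ _ := height_graft_le
    _ ≤ η := max_le hFη hMη

lemma induce_deleteEdges_starEdges_of_notMem (hvU : v ∉ U) :
    (G.deleteEdges (starEdges v S)).induce U = G.induce U := by
  ext a b
  simp only [comap_adj, Function.Embedding.coe_subtype, deleteEdges_starEdges_adj]
  have ha : (a : V) ≠ v := fun h => hvU (h ▸ a.2)
  have hb : (b : V) ≠ v := fun h => hvU (h ▸ b.2)
  tauto

lemma induce_deleteEdges_starEdges (hvU : v ∈ U) :
    (G.deleteEdges (starEdges v S)).induce U =
      (G.induce U).deleteEdges (starEdges ⟨v, hvU⟩ (Subtype.val ⁻¹' S)) := by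
  ext a b
  simp only [comap_adj, Function.Embedding.coe_subtype, deleteEdges_starEdges_adj,
    Subtype.ext_iff, Set.mem_preimage]

lemma induce_preimage_isContained_induce (U S : Set V) :
    (G.induce U).induce (Subtype.val ⁻¹' S) ⊑ G.induce S :=
  ⟨⟨induceHom (Embedding.induce U).toHom (Set.mapsTo_preimage _ _),
    induceHom_injective _ _ Subtype.val_injective.injOn⟩⟩

lemma IsTdMod.of_le [Finite V] {G' : SimpleGraph V} (h : G' ≤ G) (hZ : G.IsTdMod η Z) :
    G'.IsTdMod η Z :=
  (treedepth_le_of_isContained (IsContained.of_le (comap_monotone _ h))).trans hZ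

theorem exists_treedepth_induce_add_depth_le_height [Finite V] {ι : Type*} {U : Set V}
    (hvU : v ∈ U) {F : RootedForest U}
    (hF : ((G.deleteEdges (starEdges v S)).induce U).IsTreedepthDecomp F) (X : ι → Set V)
    (hXU : ∀ i, X i ⊆ U) (hconn : ∀ i, (G.induce (X i)).Connected)
    (hvX : ∀ i, v ∈ G.nbhdSet (X i)) (hdisj : Pairwise (Disjoint on X))
    (hXS : ∀ i, Disjoint (X i) S) (hι : F.depth ⟨v, hvU⟩ ≤ Nat.card ι) :
    ∃ i, (G.induce (X i)).treedepth + F.depth ⟨v, hvU⟩ ≤ F.height := by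
  have hXD (i : ι) : (G.deleteEdges (starEdges v S)).induce (X i) = G.induce (X i) :=
    induce_deleteEdges_starEdges_of_notMem (hvX i).1
  set f := fun i => ((G.deleteEdges (starEdges v S)).induceHomOfLE (hXU i)).toCopy
  have hdisjf : Pairwise fun i j => Disjoint (Set.range (f i)) (Set.range (f j)) := by
    refine fun i j hij => Set.disjoint_left.mpr ?_
    rintro _ ⟨a, rfl⟩ ⟨b, hba⟩
    exact Set.disjoint_left.mp (hdisj hij) a.2 (congrArg Subtype.val hba ▸ b.2)
  have hadj (i : ι) :
      ∃ a, ((G.deleteEdges (starEdges v S)).induce U).Adj ⟨v, hvU⟩ (f i a) := by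
    obtain ⟨hvXi, x, hx, hvx⟩ := hvX i
    refine ⟨⟨x, hx⟩, deleteEdges_starEdges_adj.mpr ⟨hvx, ?_⟩⟩
    rintro (⟨-, hxS⟩ | ⟨hxv, -⟩)
    · exact Set.disjoint_left.mp (hXS i) hx hxS
    · exact hvXi (hxv ▸ hx)
  obtain ⟨i, hi⟩ := exists_treedepth_add_depth_le_height hF f (fun i => hXD i ▸ hconn i) hdisjf
    (fun i a h => (hvX i).1 (by
      have hav : (a : V) = v := congrArg Subtype.val h
      exact hav ▸ a.2)) hadj hι
  exact ⟨i, hXD i ▸ hi⟩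

theorem IsTdMod.of_deleteEdges_starEdges [Finite V] {ι : Type*} [Finite ι] (hv : v ∉ S)
    (hN : G.nbhdSet S ⊆ insert v (G.neighborSet v)) (X : ι → Set V)
    (hconn : ∀ i, (G.induce (X i)).Connected)
    (hS : ∀ i, (G.induce S).treedepth ≤ (G.induce (X i)).treedepth)
    (hvX : ∀ i, v ∈ G.nbhdSet (X i)) (hdisj : Pairwise (Disjoint on X))
    (hXS : ∀ i, Disjoint (X i) S) (hZ : (G.deleteEdges (starEdges v S)).IsTdMod η Z)
    (hZX : (Z ∩ ⋃ i, X i).ncard + η ≤ Nat.card ι) : G.IsTdMod η Z := by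
  by_cases hvZ : v ∈ Z
  · rwa [IsTdMod, ← induce_deleteEdges_starEdges_of_notMem (S := S) (not_not_intro hvZ)]
  obtain ⟨F, hF, hFh⟩ :=
    ((G.deleteEdges (starEdges v S)).induce Zᶜ).exists_isTreedepthDecomp_height_eq
  have hFη : F.height ≤ η := hFh ▸ hZ
  set T : Set ι := {i | Disjoint (X i) Z}
  have hT : η ≤ Nat.card T := by
    have := Set.ncard_setOf_not_disjoint_le hdisj Z
    have := Set.ncard_add_ncard_compl T
    rw [Set.compl_ofPred] at this
    rw [Nat.card_coe_set_eq]
    omega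
  obtain ⟨i, hi⟩ := exists_treedepth_induce_add_depth_le_height hvZ hF (fun i : T => X i)
    (fun i x hx hxZ => Set.disjoint_left.mp i.2 hx hxZ) (fun i => hconn i)
    (fun i => hvX i) (fun i j hij => hdisj (Subtype.coe_ne_coe.mpr hij)) (fun i => hXS i)
    ((RootedForest.depth_le_height _).trans (hFη.trans hT))
  rw [induce_deleteEdges_starEdges hvZ] at hF
  refine treedepth_le_of_isTreedepthDecomp_deleteEdges_starEdges (S := Subtype.val ⁻¹' S) hv ?_
    hF hFη ?_
  · rintro x ⟨hxS, s, hsS, hxs⟩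
    obtain hxv | hvx := hN ⟨hxS, s, hsS, hxs⟩
    · exact Or.inl (Subtype.ext hxv)
    · exact Or.inr hvx
  · have := treedepth_le_of_isContained (induce_preimage_isContained_induce (G := G) Zᶜ S)
    have := hS i
    omega

end SimpleGraph

theorem edge_removal_lemma_general {V : Type*} [Fintype V] (η k ℓ : ℕ)
    (G : SimpleGraph V) (S : Set V) (v : V) (hv : v ∉ S)
    (hN : G.nbhdSet S ⊆ insert v (G.neighborSet v))
    (X : Fin (ℓ + η) → Set V)
    (hconn : ∀ i : Fin (ℓ + η), (G.induce (X i)).Connected)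
    (h1 : ∀ i : Fin (ℓ + η),
      (G.induce S).treedepth ≤ (G.induce (X i)).treedepth ∧ v ∈ G.nbhdSet (X i))
    (h2 : ∀ i j : Fin (ℓ + η), i ≠ j → Disjoint (X i) (X j))
    (h2' : ∀ i : Fin (ℓ + η), Disjoint (X i) S)
    (h3 : ∀ E ⊆ {e : Sym2 V | ∃ s ∈ S, e = s(v, s)},
      ∃ Z : Set V, (G.deleteEdges E).IsTdMod η Z ∧
        (∀ Z' : Set V, (G.deleteEdges E).IsTdMod η Z' → Z.ncard ≤ Z'.ncard) ∧
        (Z ∩ ⋃ i : Fin (ℓ + η), X i).ncard ≤ ℓ) :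
    (∃ Z : Set V, G.IsTdMod η Z ∧ Z.ncard ≤ k) ↔
      (∃ Z : Set V,
        (G.deleteEdges {e : Sym2 V | ∃ s ∈ S, e = s(v, s)}).IsTdMod η Z ∧
        Z.ncard ≤ k) := by
  constructor
  · rintro ⟨Z, hZ, hZk⟩
    exact ⟨Z, hZ.of_le (G.deleteEdges_le _), hZk⟩
  · rintro ⟨Z', hZ', hZ'k⟩
    obtain ⟨Z, hZ, hZmin, hZX⟩ := h3 _ subset_rfl
    refine ⟨Z, hZ.of_deleteEdges_starEdges hv hN X hconn (fun i => (h1 i).1) (fun i => (h1 i).2)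
      h2 h2' ?_, (hZmin Z' hZ').trans hZ'k⟩
    simpa using Nat.add_le_add_right hZX η

/-- Edge removal lemma: under the stated conditions, `(G, k)` is equivalent to the
instance `(G', k)` where `G'` is obtained from `G` by removing all edges between `v`
and `S`. -/
theorem edge_removal_lemma {V : Type*} [Fintype V] (η k ℓ : ℕ) (hη : 1 ≤ η)
    (G : SimpleGraph V) (S : Set V) (v : V) (hv : v ∉ S)
    (hN : G.nbhdSet S ⊆ insert v (G.neighborSet v))
    (X : Fin (ℓ + η) → Set V)
    (hconn : ∀ i : Fin (ℓ + η), (G.induce (X i)).Connected)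
    (h1 : ∀ i : Fin (ℓ + η),
      (G.induce S).treedepth ≤ (G.induce (X i)).treedepth ∧ v ∈ G.nbhdSet (X i))
    (h2 : ∀ i j : Fin (ℓ + η), i ≠ j → Disjoint (X i) (X j))
    (h2' : ∀ i : Fin (ℓ + η), Disjoint (X i) S)
    (h3 : ∀ E ⊆ {e : Sym2 V | ∃ s ∈ S, e = s(v, s)},
      ∃ Z : Set V, (G.deleteEdges E).IsTdMod η Z ∧
        (∀ Z' : Set V, (G.deleteEdges E).IsTdMod η Z' → Z.ncard ≤ Z'.ncard) ∧
        (Z ∩ ⋃ i : Fin (ℓ + η), X i).ncard ≤ ℓ) :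
    (∃ Z : Set V, G.IsTdMod η Z ∧ Z.ncard ≤ k) ↔
      (∃ Z : Set V,
        (G.deleteEdges {e : Sym2 V | ∃ s ∈ S, e = s(v, s)}).IsTdMod η Z ∧
        Z.ncard ≤ k) :=
  edge_removal_lemma_general η k ℓ G S v hv hN X hconn h1 h2 h2' h3
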